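/- Let α ∈ [0,1] and let u, v, p₀, p₁ be unit vectors in ℂ². Then |⟨u,p₀⟩|² + α·|⟨v,p₀⟩|² + |⟨u,p₁⟩|² − α·|⟨v,p₁⟩|² ≤ 1 + √(1 + α²). -/

import Mathlib

/-!
For unit vectors with `t = |⟨p₀,p₁⟩|`, `|⟨u,p₀⟩|² + |⟨u,p₁⟩|² ≤ 1 + t` (Cauchy–Schwarz against
`⟨p₀,u⟩ p₀ + ⟨p₁,u⟩ p₁`), and `|⟨v,p₀⟩|² − |⟨v,p₁⟩|² ≤ √(1 − t²)`: after rotating the phase of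
`p₁` so that `⟨p₀,p₁⟩ = t`, the vectors `p₀ ± p₁` are orthogonal with squared norms `2(1 ± t)`,
and Bessel's inequality for this pair bounds the difference. Finally
`t + α √(1 − t²) ≤ √(1 + α²)` is Cauchy–Schwarz in `ℝ²`.
-/

theorem norm_sq_sub_norm_sq_le_norm_add_mul_norm_sub {F : Type*} [NormedAddCommGroup F]
    [InnerProductSpace ℝ F] (x y : F) : ‖x‖ ^ 2 - ‖y‖ ^ 2 ≤ ‖x + y‖ * ‖x - y‖ := by
  have : ‖x‖ ^ 2 - ‖y‖ ^ 2 = inner ℝ (x + y) (x - y) := by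
    rw [inner_add_left, inner_sub_right, inner_sub_right, real_inner_self_eq_norm_sq,
      real_inner_self_eq_norm_sq, real_inner_comm]
    ring
  exact this ▸ real_inner_le_norm _ _

section InnerProductSpace

open ComplexConjugate RCLike

variable {𝕜 E : Type*} [RCLike 𝕜] [NormedAddCommGroup E] [InnerProductSpace 𝕜 E]

local notation "⟪" x ", " y "⟫" => @inner 𝕜 _ _ x y

theorem norm_inner_sq_add_norm_inner_sq_le (u p q : E) {M : ℝ} (hp : ‖p‖ ≤ M) (hq : ‖q‖ ≤ M) :
    ‖⟪u, p⟫‖ ^ 2 + ‖⟪u, q⟫‖ ^ 2 ≤ ‖u‖ ^ 2 * (M ^ 2 + ‖⟪p, q⟫‖) := by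
  set x := ⟪u, p⟫
  set y := ⟪u, q⟫
  set S := ‖x‖ ^ 2 + ‖y‖ ^ 2
  set w := conj x • p + conj y • q
  have hS : 0 ≤ S := by positivity
  have inner_w : ⟪u, w⟫ = (S : 𝕜) := by
    simp only [w, S, inner_add_right, inner_smul_right, RCLike.conj_mul, x, y]
    push_cast
    ring
  have cross : re ⟪conj x • p, conj y • q⟫ ≤ S / 2 * ‖⟪p, q⟫‖ := by
    calc re ⟪conj x • p, conj y • q⟫ ≤ ‖⟪conj x • p, conj y • q⟫‖ := re_le_norm _
      _ = ‖x‖ * ‖y‖ * ‖⟪p, q⟫‖ := by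
        simp [inner_smul_left, inner_smul_right, mul_assoc, mul_left_comm]
      _ ≤ S / 2 * ‖⟪p, q⟫‖ := by gcongr; nlinarith [sq_nonneg (‖x‖ - ‖y‖)]
  have norm_w : ‖w‖ ^ 2 ≤ S * (M ^ 2 + ‖⟪p, q⟫‖) := by
    have hp' : ‖conj x • p‖ ^ 2 ≤ ‖x‖ ^ 2 * M ^ 2 := by
      rw [norm_smul, norm_conj, mul_pow]; gcongr
    have hq' : ‖conj y • q‖ ^ 2 ≤ ‖y‖ ^ 2 * M ^ 2 := by
      rw [norm_smul, norm_conj, mul_pow]; gcongr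
    rw [norm_add_sq (𝕜 := 𝕜)]
    nlinarith
  have cauchy_schwarz : S ≤ ‖u‖ * ‖w‖ := by
    simpa [inner_w, abs_of_nonneg hS] using norm_inner_le_norm (𝕜 := 𝕜) u w
  have hS_sq : S ^ 2 ≤ S * (‖u‖ ^ 2 * (M ^ 2 + ‖⟪p, q⟫‖)) := by
    calc S ^ 2 ≤ (‖u‖ * ‖w‖) ^ 2 := by gcongr
      _ ≤ _ := by rw [mul_pow]; nlinarith [sq_nonneg ‖u‖]
  have : 0 ≤ ‖u‖ ^ 2 * (M ^ 2 + ‖⟪p, q⟫‖) := by positivity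
  nlinarith

theorem weighted_bessel_of_inner_eq_zero (u f g : E) (h : ⟪f, g⟫ = 0) :
    ‖g‖ ^ 2 * ‖⟪u, f⟫‖ ^ 2 + ‖f‖ ^ 2 * ‖⟪u, g⟫‖ ^ 2 ≤ ‖u‖ ^ 2 * (‖f‖ * ‖g‖) ^ 2 := by
  have := norm_inner_sq_add_norm_inner_sq_le (𝕜 := 𝕜) u ((‖g‖ : 𝕜) • f) ((‖f‖ : 𝕜) • g)
    (M := ‖f‖ * ‖g‖) (by simp [norm_smul, mul_comm]) (by simp [norm_smul])
  simpa [inner_smul_left, inner_smul_right, h, mul_pow] using this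

theorem norm_inner_sq_sub_norm_inner_sq_le (v p₀ p₁ : E) (hp₀ : ‖p₀‖ = 1) (hp₁ : ‖p₁‖ = 1) :
    ‖⟪v, p₀⟫‖ ^ 2 - ‖⟪v, p₁⟫‖ ^ 2 ≤ ‖v‖ ^ 2 * √(1 - ‖⟪p₀, p₁⟫‖ ^ 2) := by
  set t := ‖⟪p₀, p₁⟫‖
  have ht₀ : 0 ≤ t := norm_nonneg _
  have ht₁ : t ≤ 1 := by simpa [hp₀, hp₁] using norm_inner_le_norm (𝕜 := 𝕜) p₀ p₁
  obtain ⟨c, hc, hct⟩ := exists_norm_eq_mul_self ⟪p₀, p₁⟫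
  set q := c • p₁
  have hq : ‖q‖ = 1 := by simp [q, norm_smul, hc, hp₁]
  have hp₀q : ⟪p₀, q⟫ = t := by rw [inner_smul_right, ← hct]
  have hqp₀ : ⟪q, p₀⟫ = t := by rw [← inner_conj_symm, hp₀q, conj_ofReal]
  have hvq : ‖⟪v, q⟫‖ = ‖⟪v, p₁⟫‖ := by simp [q, inner_smul_right, hc]
  have orth : ⟪p₀ + q, p₀ - q⟫ = 0 := by
    simp only [inner_add_left, inner_sub_right, hp₀q, hqp₀, inner_self_eq_norm_sq_to_K, hp₀, hq]
    ring
  have norm_add : ‖p₀ + q‖ ^ 2 = 2 * (1 + t) := by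
    rw [norm_add_sq (𝕜 := 𝕜), hp₀q, hp₀, hq, ofReal_re]; ring
  have norm_sub : ‖p₀ - q‖ ^ 2 = 2 * (1 - t) := by
    rw [norm_sub_sq (𝕜 := 𝕜), hp₀q, hp₀, hq, ofReal_re]; ring
  have bessel := weighted_bessel_of_inner_eq_zero v _ _ orth
  rw [mul_pow, norm_add, norm_sub] at bessel
  set F := ‖⟪v, p₀ + q⟫‖ ^ 2
  set G := ‖⟪v, p₀ - q⟫‖ ^ 2
  have hF : 0 ≤ F := by positivity
  have sub_le : ‖⟪v, p₀⟫‖ ^ 2 - ‖⟪v, p₁⟫‖ ^ 2 ≤ √(F * G) := by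
    rw [← hvq, Real.sqrt_mul' _ (by positivity), Real.sqrt_sq (norm_nonneg _),
      Real.sqrt_sq (norm_nonneg _), inner_add_right, inner_sub_right]
    exact norm_sq_sub_norm_sq_le_norm_add_mul_norm_sub _ _
  -- With `n = ‖v‖²`: `(1 + t)(n²(1 - t²) - FG) = (1 - t)(n(1 + t) - F)² + F · (slack in bessel)`.
  have hFG : (1 + t) * (F * G) ≤ (1 + t) * ((‖v‖ ^ 2) ^ 2 * (1 - t ^ 2)) := by
    nlinarith [mul_nonneg (sub_nonneg.2 ht₁) (sq_nonneg (‖v‖ ^ 2 * (1 + t) - F))]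
  calc _ ≤ √(F * G) := sub_le
    _ ≤ √((‖v‖ ^ 2) ^ 2 * (1 - t ^ 2)) :=
      Real.sqrt_le_sqrt (le_of_mul_le_mul_left hFG (by positivity))
    _ = ‖v‖ ^ 2 * √(1 - t ^ 2) := by
      rw [Real.sqrt_mul' _ (by nlinarith), Real.sqrt_sq (by positivity)]

end InnerProductSpace

theorem add_mul_sqrt_one_sub_sq_le_sqrt_one_add_sq (t α : ℝ) (ht : t ^ 2 ≤ 1) :
    t + α * √(1 - t ^ 2) ≤ √(1 + α ^ 2) := by
  refine (le_abs_self _).trans (Real.abs_le_sqrt ?_)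
  have := Real.sq_sqrt (sub_nonneg.2 ht)
  nlinarith [sq_nonneg (α * t - √(1 - t ^ 2))]

theorem EuclideanSpace.norm_toLp_eq_one_of_sum_normSq {ι : Type*} [Fintype ι] {w : ι → ℂ}
    (hw : ∑ i, Complex.normSq (w i) = 1) : ‖WithLp.toLp 2 w‖ = 1 := by
  simp [EuclideanSpace.norm_eq, Complex.sq_norm, hw]

theorem Complex.normSq_star_dotProduct {ι : Type*} [Fintype ι] (w p : ι → ℂ) :
    Complex.normSq (star w ⬝ᵥ p) = ‖inner ℂ (WithLp.toLp 2 w) (WithLp.toLp 2 p)‖ ^ 2 := by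
  rw [EuclideanSpace.inner_toLp_toLp, dotProduct_comm, Complex.sq_norm]

theorem four_vector_inequality
    (α : ℝ) (hα : α ∈ Set.Icc (0 : ℝ) 1)
    (u v p₀ p₁ : Fin 2 → ℂ)
    (hu : ∑ i, Complex.normSq (u i) = 1)
    (hv : ∑ i, Complex.normSq (v i) = 1)
    (hp₀ : ∑ i, Complex.normSq (p₀ i) = 1)
    (hp₁ : ∑ i, Complex.normSq (p₁ i) = 1) :
    Complex.normSq (star u ⬝ᵥ p₀) + α * Complex.normSq (star v ⬝ᵥ p₀)
      + Complex.normSq (star u ⬝ᵥ p₁) - α * Complex.normSq (star v ⬝ᵥ p₁)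
    ≤ 1 + Real.sqrt (1 + α ^ 2) := by
  have hp₀' := EuclideanSpace.norm_toLp_eq_one_of_sum_normSq hp₀
  have hp₁' := EuclideanSpace.norm_toLp_eq_one_of_sum_normSq hp₁
  set t := ‖inner ℂ (WithLp.toLp 2 p₀) (WithLp.toLp 2 p₁)‖
  have ht : t ^ 2 ≤ 1 := pow_le_one₀ (norm_nonneg _) <| by
    simpa [hp₀', hp₁'] using norm_inner_le_norm (𝕜 := ℂ) (WithLp.toLp 2 p₀) (WithLp.toLp 2 p₁)
  have sum_le := norm_inner_sq_add_norm_inner_sq_le (𝕜 := ℂ) (WithLp.toLp 2 u) _ _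
    hp₀'.le hp₁'.le
  have sub_le := norm_inner_sq_sub_norm_inner_sq_le (𝕜 := ℂ) (WithLp.toLp 2 v) _ _ hp₀' hp₁'
  rw [EuclideanSpace.norm_toLp_eq_one_of_sum_normSq hu] at sum_le
  rw [EuclideanSpace.norm_toLp_eq_one_of_sum_normSq hv] at sub_le
  simp only [Complex.normSq_star_dotProduct]
  nlinarith [mul_le_mul_of_nonneg_left sub_le hα.1,
    add_mul_sqrt_one_sub_sq_le_sqrt_one_add_sq t α ht]
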